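/- For every lattice function f : ℤⁿ → Cl_{0,n} and each sign choice, D_h^±((mh)·f) = −2·V_{h,n/2}^± f − (mh)·(D_h^± f), where (mh)·f is pointwise left multiplication by the Clifford vector mh and V_{h,n/2}^± = (n/2)·I + E_h^± − A_h^± + (1/2)·B_h^±. -/

import Mathlib

open Finset

noncomputable section

/-- The quadratic form on `ℝⁿ` whose Clifford algebra is `Cl_{0,n}`:
`Q(x) = −(x₁² + ⋯ + xₙ²)`, so that the generators satisfy `eᵢeⱼ + eⱼeᵢ = −2δᵢⱼ`. -/
def negQ (n : ℕ) : QuadraticForm ℝ (Fin n → ℝ) :=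
  QuadraticMap.weightedSumSquares ℝ (fun _ : Fin n => (-1 : ℝ))

/-- The Clifford algebra `Cl_{0,n}`. -/
abbrev Cl (n : ℕ) := CliffordAlgebra (negQ n)

/-- The generators `e i` of `Cl_{0,n}`. -/
def eCl (n : ℕ) (i : Fin n) : Cl n := CliffordAlgebra.ι (negQ n) (Pi.single i 1)

/-- `1` for the forward (upper sign) choice, `-1` for the backward one. -/
def sgn (σ : Bool) : ℝ := if σ then 1 else -1

/-- Forward/backward difference `∂_h^{±i}` of a lattice function with values in a real module. -/
def fdiff {n : ℕ} {A : Type*} [AddCommGroup A] [Module ℝ A] (σ : Bool) (h : ℝ) (i : Fin n)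
    (f : (Fin n → ℤ) → A) : (Fin n → ℤ) → A := fun m =>
  if σ then h⁻¹ • (f (m + Pi.single i 1) - f m) else h⁻¹ • (f m - f (m - Pi.single i 1))

/-- `m ∓ εᵢ` (upper sign paired with the forward difference). -/
def shiftB {n : ℕ} (σ : Bool) (i : Fin n) (m : Fin n → ℤ) : Fin n → ℤ :=
  if σ then m - Pi.single i 1 else m + Pi.single i 1

/-- One-dimensional factorial power `(x)_∓^{(s)} = ∏_{k=0}^{s-1} (x ∓ k h)`
(upper sign paired with the forward difference `σ = true`). -/
def factPow (σ : Bool) (h x : ℝ) (s : ℕ) : ℝ :=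
  ∏ k ∈ range s, (x - sgn σ * k * h)

/-- Multi-index factorial power `(mh)_∓^{(α)}`. -/
def mfp {n : ℕ} (σ : Bool) (h : ℝ) (m : Fin n → ℤ) (α : Fin n → ℕ) : ℝ :=
  ∏ i, factPow σ h (m i * h) (α i)

/-- The difference Dirac operator `D_h^± = Σᵢ eᵢ ∂_h^{±i}`. -/
def Dirac (n : ℕ) (σ : Bool) (h : ℝ) (f : (Fin n → ℤ) → Cl n) : (Fin n → ℤ) → Cl n :=
  fun m => ∑ i, eCl n i * fdiff σ h i f m

/-- The Clifford vector `mh = Σᵢ (mᵢ h) eᵢ`. -/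
def vecCl (n : ℕ) (h : ℝ) (m : Fin n → ℤ) : Cl n := ∑ i, ((m i : ℝ) * h) • eCl n i

/-- The difference Euler operator `(E_h^± f)(m) = Σᵢ (mᵢ h) (∂_h^{±i} f)(m ∓ εᵢ)`. -/
def Euler (n : ℕ) (σ : Bool) (h : ℝ) (f : (Fin n → ℤ) → Cl n) : (Fin n → ℤ) → Cl n :=
  fun m => ∑ i, ((m i : ℝ) * h) • fdiff σ h i f (shiftB σ i m)

/-- The second-order operator `(A_h^± f)(m) = ∓ h Σᵢ (mᵢ h) (∂_h^{±i} ∂_h^{∓i} f)(m)`. -/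
def Aop (n : ℕ) (σ : Bool) (h : ℝ) (f : (Fin n → ℤ) → Cl n) : (Fin n → ℤ) → Cl n :=
  fun m => (-(sgn σ) * h) • ∑ i, ((m i : ℝ) * h) • fdiff σ h i (fdiff (!σ) h i f) m

/-- `L_{jk}^± f = (mⱼ h) ∂_h^{±k} f − (m_k h) ∂_h^{±j} f`. -/
def Lop (n : ℕ) (σ : Bool) (h : ℝ) (j k : Fin n) (f : (Fin n → ℤ) → Cl n) :
    (Fin n → ℤ) → Cl n :=
  fun m => ((m j : ℝ) * h) • fdiff σ h k f m - ((m k : ℝ) * h) • fdiff σ h j f m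

/-- The difference Gamma operator `Γ_h^± f = −Σ_{j<k} eⱼ e_k L_{jk}^± f − A_h^± f`. -/
def Gamma (n : ℕ) (σ : Bool) (h : ℝ) (f : (Fin n → ℤ) → Cl n) : (Fin n → ℤ) → Cl n :=
  fun m => -(∑ j, ∑ k, if j < k then eCl n j * eCl n k * Lop n σ h j k f m else 0)
    - Aop n σ h f m

/-- `B_h^± = ±h Σᵢ ∂_h^{±i}`. -/
def Bop (n : ℕ) (σ : Bool) (h : ℝ) (f : (Fin n → ℤ) → Cl n) : (Fin n → ℤ) → Cl n :=
  fun m => (sgn σ * h) • ∑ i, fdiff σ h i f m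

/-- `(C_h^± f)(m) = Σᵢ (mᵢ h) eᵢ f(m ∓ εᵢ)`. -/
def Cop (n : ℕ) (σ : Bool) (h : ℝ) (f : (Fin n → ℤ) → Cl n) : (Fin n → ℤ) → Cl n :=
  fun m => ∑ i, ((m i : ℝ) * h) • (eCl n i * f (shiftB σ i m))

/-- `V_{h,r}^± = r I + E_h^± − A_h^± + (1/2) B_h^±`. -/
def Vop (n : ℕ) (σ : Bool) (h r : ℝ) (f : (Fin n → ℤ) → Cl n) : (Fin n → ℤ) → Cl n :=
  fun m => r • f m + Euler n σ h f m - Aop n σ h f m + (1/2 : ℝ) • Bop n σ h f m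

/-- `Π_k^±`: the real span of the lattice functions `m ↦ (mh)_∓^{(α)} a` with `|α| ≤ k`. -/
def PiLe (n : ℕ) (σ : Bool) (h : ℝ) (k : ℕ) : Submodule ℝ ((Fin n → ℤ) → Cl n) :=
  Submodule.span ℝ {f | ∃ (α : Fin n → ℕ) (a : Cl n),
    (∑ i, α i) ≤ k ∧ f = fun m => mfp σ h m α • a}

/-- The space of homogeneous discrete polynomials of degree exactly `k`:
the real span of the lattice functions `m ↦ (mh)_∓^{(α)} a` with `|α| = k`. -/
def PiEq (n : ℕ) (σ : Bool) (h : ℝ) (k : ℕ) : Submodule ℝ ((Fin n → ℤ) → Cl n) :=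
  Submodule.span ℝ {f | ∃ (α : Fin n → ℕ) (a : Cl n),
    (∑ i, α i) = k ∧ f = fun m => mfp σ h m α • a}

/-!
Discrete Leibniz rule: `∂_h^{±i}((mh) f)(m) = (mh) ∂_h^{±i} f(m) + eᵢ f(m ± εᵢ)`. Moving `eᵢ`
past `mh` costs `−2 mᵢh` (anticommutator in `Cl_{0,n}`), `eᵢ eᵢ = −1` turns the shift term into
`−f(m ± εᵢ)`, and re-expanding `f(m ± εᵢ)` and `∂_h^{±i} f(m)` around `m` and `m ∓ εᵢ` produces
exactly the `i`-th summands of `I`, `E_h^±`, `A_h^±` and `B_h^±`.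
-/

lemma polar_negQ {n : ℕ} (x y : Fin n → ℝ) :
    QuadraticMap.polar (negQ n) x y = -2 * ∑ j, x j * y j := by
  simp only [QuadraticMap.polar, negQ, QuadraticMap.weightedSumSquares_apply, smul_eq_mul,
    Pi.add_apply, ← sum_sub_distrib, mul_sum]
  exact sum_congr rfl fun _ _ => by ring

lemma eCl_mul_self (n : ℕ) (i : Fin n) : eCl n i * eCl n i = -1 := by
  have hQ : negQ n (Pi.single i 1) = -1 := by
    simp [negQ, QuadraticMap.weightedSumSquares_apply, Pi.single_apply]
  rw [eCl, CliffordAlgebra.ι_sq_scalar, hQ, map_neg, map_one]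

lemma vecCl_eq_ι (n : ℕ) (h : ℝ) (m : Fin n → ℤ) :
    vecCl n h m = CliffordAlgebra.ι (negQ n) (fun j => (m j : ℝ) * h) := by
  simp only [vecCl, eCl, ← map_smul, ← map_sum]
  congr 1
  ext j
  simp [Finset.sum_apply, Pi.single_apply]

lemma vecCl_add (n : ℕ) (h : ℝ) (m k : Fin n → ℤ) :
    vecCl n h (m + k) = vecCl n h m + vecCl n h k := by
  simp [vecCl, add_mul, add_smul, sum_add_distrib]

lemma vecCl_sub (n : ℕ) (h : ℝ) (m k : Fin n → ℤ) :
    vecCl n h (m - k) = vecCl n h m - vecCl n h k := by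
  simp [vecCl, sub_mul, sub_smul, sum_sub_distrib]

lemma vecCl_single (n : ℕ) (h : ℝ) (i : Fin n) : vecCl n h (Pi.single i 1) = h • eCl n i := by
  simp [vecCl, Pi.single_apply, ite_smul]

lemma eCl_mul_vecCl (n : ℕ) (h : ℝ) (i : Fin n) (m : Fin n → ℤ) :
    eCl n i * vecCl n h m = -(vecCl n h m * eCl n i) - (2 * ((m i : ℝ) * h)) • 1 := by
  have hanti := CliffordAlgebra.ι_mul_ι_add_swap (Q := negQ n) (Pi.single i 1)
    (fun j => (m j : ℝ) * h)
  rw [polar_negQ, Fintype.sum_eq_single i fun j hj => by simp [hj],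
    Algebra.algebraMap_eq_smul_one] at hanti
  rw [eCl, vecCl_eq_ι]
  simp only [Pi.single_eq_same, one_mul] at hanti
  linear_combination (norm := module) hanti

section LatticeDifferences

variable {n : ℕ} {A : Type*} [AddCommGroup A] [Module ℝ A] {h : ℝ}

lemma apply_shiftB_not_eq (hh : h ≠ 0) (σ : Bool) (i : Fin n) (f : (Fin n → ℤ) → A)
    (m : Fin n → ℤ) : f (shiftB (!σ) i m) = f m + (sgn σ * h) • fdiff σ h i f m := by
  cases σ <;> simp [shiftB, sgn, fdiff, smul_smul, hh]

lemma fdiff_eq_fdiff_shiftB_add (hh : h ≠ 0) (σ : Bool) (i : Fin n) (f : (Fin n → ℤ) → A)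
    (m : Fin n → ℤ) :
    fdiff σ h i f m
      = fdiff σ h i f (shiftB σ i m) + (sgn σ * h) • fdiff σ h i (fdiff (!σ) h i f) m := by
  cases σ <;> simp only [shiftB, sgn, fdiff, Bool.not_true, Bool.not_false, if_true, if_false,
    Bool.false_eq_true, sub_add_cancel, add_sub_cancel_right] <;> match_scalars <;>
    field_simp <;> ring

end LatticeDifferences

lemma fdiff_vecCl_mul {n : ℕ} {h : ℝ} (hh : h ≠ 0) (σ : Bool) (i : Fin n)
    (f : (Fin n → ℤ) → Cl n) (m : Fin n → ℤ) :
    fdiff σ h i (fun m => vecCl n h m * f m) m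
      = vecCl n h m * fdiff σ h i f m + eCl n i * f (shiftB (!σ) i m) := by
  cases σ <;> simp only [fdiff, shiftB, Bool.not_true, Bool.not_false, if_true, if_false,
    Bool.false_eq_true, vecCl_add, vecCl_sub, vecCl_single] <;>
    simp only [add_mul, sub_mul, mul_sub, smul_mul_assoc, mul_smul_comm, smul_sub, smul_add,
      smul_smul, inv_mul_cancel₀ hh, one_smul] <;> abel

/-- The right-hand side is the `i`-th summand of `−2 V_{h,n/2}^± f − (mh) D_h^± f`. -/
lemma eCl_mul_fdiff_vecCl_mul {n : ℕ} {h : ℝ} (hh : h ≠ 0) (σ : Bool) (i : Fin n)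
    (f : (Fin n → ℤ) → Cl n) (m : Fin n → ℤ) :
    eCl n i * fdiff σ h i (fun m => vecCl n h m * f m) m
      = (-2 : ℝ) • ((1 / 2 : ℝ) • f m + ((m i : ℝ) * h) • fdiff σ h i f (shiftB σ i m)
          - (-(sgn σ) * h) • (((m i : ℝ) * h) • fdiff σ h i (fdiff (!σ) h i f) m)
          + (1 / 2 : ℝ) • ((sgn σ * h) • fdiff σ h i f m))
        - vecCl n h m * (eCl n i * fdiff σ h i f m) := by
  rw [fdiff_vecCl_mul hh, mul_add, ← mul_assoc, ← mul_assoc, eCl_mul_vecCl, eCl_mul_self,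
    apply_shiftB_not_eq hh σ i f m]
  have hsecond := fdiff_eq_fdiff_shiftB_add hh σ i f m
  simp only [sub_mul, neg_mul, one_mul, mul_assoc, smul_mul_assoc]
  linear_combination (norm := module) (-(2 * ((m i : ℝ) * h))) • hsecond

theorem dirac_vec_mul_general (n : ℕ) (h : ℝ) (hh : 0 < h) (σ : Bool)
    (f : (Fin n → ℤ) → Cl n) :
    Dirac n σ h (fun m => vecCl n h m * f m)
      = fun m => (-2 : ℝ) • Vop n σ h ((n : ℝ) / 2) f m - vecCl n h m * Dirac n σ h f m := by
  funext m
  have hhalf : ((n : ℝ) / 2) • f m = ∑ _i : Fin n, (1 / 2 : ℝ) • f m := by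
    rw [sum_const, card_univ, Fintype.card_fin, ← Nat.cast_smul_eq_nsmul ℝ, smul_smul,
      div_eq_mul_one_div]
  simp only [Dirac, Vop, Euler, Aop, Bop, eCl_mul_fdiff_vecCl_mul hh.ne', hhalf, mul_sum,
    smul_sum, ← sum_add_distrib, ← sum_sub_distrib]

/-- Proposition 3.2: `D_h^±((mh) f) = −2 V_{h,n/2}^± f − (mh) D_h^± f`. -/
theorem dirac_vec_mul (n : ℕ) (hn : 1 ≤ n) (h : ℝ) (hh : 0 < h) (σ : Bool)
    (f : (Fin n → ℤ) → Cl n) :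
    Dirac n σ h (fun m => vecCl n h m * f m)
      = fun m => (-2 : ℝ) • Vop n σ h ((n : ℝ) / 2) f m - vecCl n h m * Dirac n σ h f m :=
  dirac_vec_mul_general n h hh σ f
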